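/- Let ⋆ be the unique binary operation on {1,...,N} satisfying p ⋆ 1 = p + 1 mod N and left distributivity on right multiples of 1. Then for all p, q in {1,...,N}, p ⋆ q = (p+1)^{(q)}, where x^{(1)} = x and x^{(k+1)} = x^{(k)} ⋆ x are left powers, and p + 1 is taken mod N in {1,...,N}. -/

import Mathlib

def LaverAxioms (N : ℕ) (star : ℕ → ℕ → ℕ) : Prop :=
  (∀ p q, p ∈ Set.Icc 1 N → q ∈ Set.Icc 1 N → star p q ∈ Set.Icc 1 N) ∧
  (∀ p ∈ Set.Icc 1 N, star p 1 = p % N + 1) ∧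
  (∀ p q, p ∈ Set.Icc 1 N → q ∈ Set.Icc 1 N →
    star p (star q 1) = star (star p q) (star p 1))

/-- Left powers: `leftPow star x k = x^{(k+1)}`, i.e. x^{(1)} = x and
x^{(k+1)} = x^{(k)} ⋆ x. -/
def leftPow (star : ℕ → ℕ → ℕ) (x : ℕ) : ℕ → ℕ
  | 0 => x
  | k + 1 => star (leftPow star x k) x

/-! Below `N`, right multiplication by `1` is the successor, so `p ⋆ (q + 1) = p ⋆ (q ⋆ 1)`
and left distributivity unfolds it to `(p ⋆ q) ⋆ (p ⋆ 1)`; induction on `q` then exhibits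
`p ⋆ q` as the `q`-th left power of `p ⋆ 1 = p + 1`. -/

theorem leftPow_of_pos (star : ℕ → ℕ → ℕ) (x : ℕ) {n : ℕ} (hn : 1 ≤ n) :
    leftPow star x n = star (leftPow star x (n - 1)) x := by
  obtain ⟨k, rfl⟩ := Nat.exists_eq_add_of_le' hn
  rfl

namespace LaverAxioms

variable {N : ℕ} {star : ℕ → ℕ → ℕ}

theorem star_one (h : LaverAxioms N star) {p : ℕ} (hp : p ∈ Set.Icc 1 N) :
    star p 1 = p % N + 1 :=
  h.2.1 p hp

theorem star_one_of_lt (h : LaverAxioms N star) {n : ℕ} (hn : 1 ≤ n) (hnN : n < N) :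
    star n 1 = n + 1 := by
  rw [h.star_one ⟨hn, hnN.le⟩, Nat.mod_eq_of_lt hnN]

theorem star_succ (h : LaverAxioms N star) {p n : ℕ} (hp : p ∈ Set.Icc 1 N) (hn : 1 ≤ n)
    (hnN : n < N) : star p (n + 1) = star (star p n) (p % N + 1) := by
  rw [← h.star_one_of_lt hn hnN, h.2.2 p n hp ⟨hn, hnN.le⟩, h.star_one hp]

end LaverAxioms

theorem laver_left_powers_general (N : ℕ) (star : ℕ → ℕ → ℕ)
    (h : LaverAxioms N star) :
    ∀ p ∈ Set.Icc 1 N, ∀ q ∈ Set.Icc 1 N,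
      star p q = leftPow star (p % N + 1) (q - 1) := by
  rintro p hp q ⟨hq, hqN⟩
  induction q, hq using Nat.le_induction with
  | base => exact h.star_one hp
  | succ n hn ih =>
    rw [h.star_succ hp hn hqN, ih (Nat.le_of_succ_le hqN), Nat.add_sub_cancel, leftPow_of_pos star _ hn]

/-- for all p, q in {1,...,N}, p ⋆ q = (p+1)^{(q)}, where p+1 is taken
mod N in {1,...,N} (i.e. p % N + 1) and x^{(q)} = leftPow star x (q-1). -/
theorem laver_left_powers (N : ℕ) (hN : 0 < N) (star : ℕ → ℕ → ℕ)
    (h : LaverAxioms N star) :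
    ∀ p ∈ Set.Icc 1 N, ∀ q ∈ Set.Icc 1 N,
      star p q = leftPow star (p % N + 1) (q - 1) :=
  laver_left_powers_general N star h
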